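/- The limit of Q(t)/t as t → 0 from the right exists and equals 4/3 + π + 3·∫₀¹ (log s)·(1−s)^{1/2} ds, and this limit is strictly positive. -/

import Mathlib

/-!
Writing `sin (t log s) = t · log s · sinc (t log s)`, one has for `t ≠ 0`
`Q t / t = C t · (2 + 3 tanh(πt/2)/t) + S t · (3 − 2t tanh(πt/2))` with
`C t = ∫₀¹ cos (t log s) √(1−s)` and `S t = ∫₀¹ sinc (t log s) log s √(1−s)`.
Dominated convergence (by `√(1−s)` and `|log s| √(1−s)`) gives `C t → ∫₀¹ √(1−s) = 2/3` and
`S t → L := ∫₀¹ log s √(1−s)`, while `tanh(πt/2)/t → π/2`; so `Q t / t → 4/3 + π + 3L`.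
Positivity: `log s ≤ log s · √(1−s)` gives `L ≥ ∫₀¹ log s = −1`, and `4/3 + π − 3 > 0`.
-/

/-- The function
`Q(t) = (∫₀¹ cos(t log s)(1−s)^{1/2} ds)(2t + 3 tanh(πt/2))
      + (∫₀¹ sin(t log s)(1−s)^{1/2} ds)(3 − 2t tanh(πt/2))`. -/
noncomputable def Q (t : ℝ) : ℝ :=
  (∫ s in (0:ℝ)..1, Real.cos (t * Real.log s) * Real.sqrt (1 - s)) *
    (2 * t + 3 * Real.tanh (Real.pi * t / 2)) +
  (∫ s in (0:ℝ)..1, Real.sin (t * Real.log s) * Real.sqrt (1 - s)) *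
    (3 - 2 * t * Real.tanh (Real.pi * t / 2))

open Real Filter Topology MeasureTheory Set intervalIntegral

namespace Real

@[fun_prop]
lemma continuous_tanh : Continuous tanh := by
  simp only [funext tanh_eq_sinh_div_cosh]
  exact continuous_sinh.div continuous_cosh fun x => (cosh_pos x).ne'

lemma hasDerivAt_tanh_zero : HasDerivAt tanh 1 0 := by
  have h := (hasDerivAt_sinh 0).div (hasDerivAt_cosh 0) (cosh_pos 0).ne'
  rw [show sinh / cosh = tanh from funext fun x => (tanh_eq_sinh_div_cosh x).symm] at h
  simpa using h

lemma tendsto_tanh_mul_div (c : ℝ) :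
    Tendsto (fun t => tanh (c * t) / t) (𝓝[≠] 0) (𝓝 c) := by
  have h := (mul_zero c ▸ hasDerivAt_tanh_zero).comp 0 ((hasDerivAt_id (0 : ℝ)).const_mul c)
  rw [hasDerivAt_iff_tendsto_slope_zero] at h
  simpa [div_eq_inv_mul] using h

lemma sin_mul_eq_mul_sinc (t x : ℝ) : sin (t * x) = t * (x * sinc (t * x)) := by
  rcases eq_or_ne (t * x) 0 with h | h
  · rw [h, sin_zero, ← mul_assoc, h, zero_mul]
  · rw [sinc_of_ne_zero h, ← mul_assoc, mul_div_cancel₀ _ h]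

end Real

lemma tendsto_integral_comp_mul_mul {h φ f : ℝ → ℝ} {a b C : ℝ} (hh : Continuous h)
    (hC : ∀ x, |h x| ≤ C) (hφ : Measurable φ) (hf : IntervalIntegrable f volume a b) :
    Tendsto (fun t => ∫ s in a..b, h (t * φ s) * f s) (𝓝 0)
      (𝓝 (h 0 * ∫ s in a..b, f s)) := by
  rw [← intervalIntegral.integral_const_mul]
  refine tendsto_integral_filter_of_dominated_convergence (fun s => C * |f s|)
    (.of_forall fun t => ?_) (.of_forall fun t => .of_forall fun s _ => ?_)
    (hf.norm.const_mul C) (.of_forall fun s _ => ?_)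
  · exact ((hh.measurable.comp (hφ.const_mul t)).aestronglyMeasurable).mul hf.def'.1
  · rw [norm_mul, Real.norm_eq_abs, Real.norm_eq_abs]
    exact mul_le_mul_of_nonneg_right (hC _) (abs_nonneg _)
  · have : Tendsto (fun t => h (t * φ s)) (𝓝 0) (𝓝 (h (0 * φ s))) :=
      (hh.comp (continuous_mul_const _)).tendsto 0
    simpa using this.mul_const (f s)

lemma integral_sqrt_one_sub : ∫ s in (0:ℝ)..1, √(1 - s) = 2 / 3 := by
  rw [integral_comp_sub_left (fun x => √x), sub_self, sub_zero,
    integral_congr (g := fun x => x ^ (1 / 2 : ℝ)) fun x _ => sqrt_eq_rpow x,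
    integral_rpow (Or.inl (by norm_num))]
  norm_num

lemma intervalIntegrable_log_mul_sqrt_one_sub :
    IntervalIntegrable (fun s => log s * √(1 - s)) volume 0 1 :=
  intervalIntegrable_log'.mul_continuousOn (by fun_prop)

lemma neg_one_le_integral_log_mul_sqrt_one_sub :
    -1 ≤ ∫ s in (0:ℝ)..1, log s * √(1 - s) := by
  have h := integral_mono_on zero_le_one intervalIntegrable_log'
    intervalIntegrable_log_mul_sqrt_one_sub fun s hs => ?_
  · simpa using h
  · have hlog : log s ≤ 0 := log_nonpos hs.1 hs.2
    have hsqrt : √(1 - s) ≤ 1 := sqrt_le_one.mpr (by linarith [hs.1])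
    nlinarith [sqrt_nonneg (1 - s)]

lemma Q_div_eq {t : ℝ} (ht : t ≠ 0) :
    Q t / t = (∫ s in (0:ℝ)..1, cos (t * log s) * √(1 - s)) * (2 + 3 * (tanh (π / 2 * t) / t)) +
      (∫ s in (0:ℝ)..1, sinc (t * log s) * (log s * √(1 - s))) *
        (3 - 2 * t * tanh (π / 2 * t)) := by
  have hsin : ∫ s in (0:ℝ)..1, sin (t * log s) * √(1 - s) =
      t * ∫ s in (0:ℝ)..1, sinc (t * log s) * (log s * √(1 - s)) := by
    rw [← intervalIntegral.integral_const_mul]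
    exact integral_congr fun s _ => by rw [sin_mul_eq_mul_sinc]; ring
  rw [Q, hsin, show π * t / 2 = π / 2 * t by ring]
  field_simp

/-- The limit of `Q(t)/t` as `t → 0⁺` exists, equals
`4/3 + π + 3·∫₀¹ (log s)(1−s)^{1/2} ds`, and is strictly positive. -/
theorem Q_div_t_tendsto :
    Filter.Tendsto (fun t => Q t / t) (nhdsWithin 0 (Set.Ioi 0))
      (nhds (4 / 3 + Real.pi +
        3 * ∫ s in (0:ℝ)..1, Real.log s * Real.sqrt (1 - s))) ∧
    0 < 4 / 3 + Real.pi + 3 * ∫ s in (0:ℝ)..1, Real.log s * Real.sqrt (1 - s) := by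
  refine ⟨?_, by linarith [neg_one_le_integral_log_mul_sqrt_one_sub, pi_gt_three]⟩
  have hC := tendsto_integral_comp_mul_mul continuous_cos abs_cos_le_one measurable_log
    ((by fun_prop : Continuous fun s => √(1 - s)).intervalIntegrable 0 1)
  have hS := tendsto_integral_comp_mul_mul continuous_sinc abs_sinc_le_one measurable_log
    intervalIntegrable_log_mul_sqrt_one_sub
  have htanh := (tendsto_tanh_mul_div (π / 2)).mono_left
    (nhdsWithin_mono 0 fun t (ht : t ∈ Ioi 0) => ne_of_gt ht)
  have hvanish : Tendsto (fun t => 2 * t * tanh (π / 2 * t)) (𝓝 0) (𝓝 0) :=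
    (by fun_prop : Continuous fun t => 2 * t * tanh (π / 2 * t)).tendsto' 0 0 (by simp)
  have hlim := ((hC.mono_left nhdsWithin_le_nhds).mul ((tendsto_const_nhds (x := 2)).add
    (htanh.const_mul 3))).add ((hS.mono_left nhdsWithin_le_nhds).mul
    ((tendsto_const_nhds (x := 3)).sub (hvanish.mono_left nhdsWithin_le_nhds)))
  rw [cos_zero, sinc_zero, integral_sqrt_one_sub] at hlim
  convert hlim.congr' (eventually_nhdsWithin_of_forall fun t (ht : t ∈ Ioi 0) =>
    (Q_div_eq ht.ne').symm) using 2
  ring
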